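/- For every positive integer n, the sum of divisors function satisfies σ(n) = Σ_{k=1}^{n} ⌊n/k⌋ · μ(k / gcd(n,k)) · (φ(k) / φ(k / gcd(n,k))). -/

import Mathlib

/-!
Ramanujan's sum `c_k(n) = ∑_{d ∣ gcd(n, k)} μ(k / d) d` is, as a function of `k`, the Dirichlet
convolution of `μ` with `h_n(d) = d · [d ∣ n]`. Hence `∑_{k ∣ j} c_k(n) = h_n(j)` by Möbius
inversion, and summing over `j ≤ n` gives `∑_{k ≤ n} ⌊n / k⌋ c_k(n) = ∑_{j ≤ n} h_n(j) = σ(n)`.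
The summand of the theorem is Hölder's closed form of `c_k(n)`: both sides are multiplicative in
`k`, and at a prime power `p^(a+1)` with `gcd(n, p^(a+1)) = p^j` both equal `φ(p^(a+1))`, `-p^a`
or `0` according as `j = a + 1`, `j = a` or `j < a`.
-/

open Finset ArithmeticFunction
open scoped ArithmeticFunction.Moebius ArithmeticFunction.zeta

namespace ArithmeticFunction

section CommRing

variable {R : Type*} [CommRing R]

theorem moebius_mul_apply_prime_pow_succ {p : ℕ} (hp : p.Prime) (f : ArithmeticFunction R)
    (a : ℕ) : ((μ : ArithmeticFunction R) * f) (p ^ (a + 1)) = f (p ^ (a + 1)) - f (p ^ a) := by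
  rw [mul_apply, Nat.sum_divisorsAntidiagonal (fun x y => (μ : ArithmeticFunction R) x * f y),
    Nat.sum_divisors_prime_pow hp, sum_range_succ', sum_range_succ']
  have hsq : ∀ i ∈ range a, (μ : ArithmeticFunction R) (p ^ (i + 1 + 1)) *
      f (p ^ (a + 1) / p ^ (i + 1 + 1)) = 0 := fun i _ => by
    rw [intCoe_apply, moebius_apply_prime_pow hp (by omega), if_neg (by omega), Int.cast_zero,
      zero_mul]
  rw [sum_eq_zero hsq, Nat.pow_div (by omega) hp.pos, Nat.add_sub_cancel, intCoe_apply,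
    intCoe_apply, zero_add, pow_one, moebius_apply_prime hp, pow_zero, moebius_apply_one,
    Nat.div_one]
  push_cast
  ring

variable (R) in
def idOnDivisors (n : ℕ) : ArithmeticFunction R :=
  ⟨fun d => if d ∣ n then (d : R) else 0, by simp⟩

theorem idOnDivisors_apply (n d : ℕ) : idOnDivisors R n d = if d ∣ n then (d : R) else 0 := rfl

theorem isMultiplicative_idOnDivisors (n : ℕ) : (idOnDivisors R n).IsMultiplicative := by
  refine ⟨by simp [idOnDivisors_apply], fun {a b} hab => ?_⟩
  have hdvd : a * b ∣ n ↔ a ∣ n ∧ b ∣ n :=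
    ⟨fun h => ⟨(dvd_mul_right a b).trans h, (dvd_mul_left b a).trans h⟩,
      fun h => hab.mul_dvd_of_dvd_of_dvd h.1 h.2⟩
  simp only [idOnDivisors_apply, hdvd]
  by_cases ha : a ∣ n <;> by_cases hb : b ∣ n <;> simp [ha, hb]

theorem sum_Ioc_idOnDivisors (n : ℕ) :
    ∑ d ∈ Ioc 0 n, idOnDivisors R n d = ∑ d ∈ n.divisors, (d : R) := by
  simp only [idOnDivisors_apply, ← sum_filter]
  rfl

variable (R) in
/-- Ramanujan's sum `c_k(n)`, in its divisor-sum form, as a function of `k`. -/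
def ramanujanSum (n : ℕ) : ArithmeticFunction R := μ * idOnDivisors R n

theorem isMultiplicative_ramanujanSum (n : ℕ) : (ramanujanSum R n).IsMultiplicative :=
  isMultiplicative_moebius.intCast.mul (isMultiplicative_idOnDivisors n)

theorem ramanujanSum_mul_zeta (n : ℕ) : ramanujanSum R n * ζ = idOnDivisors R n := by
  rw [ramanujanSum, mul_right_comm, coe_moebius_mul_coe_zeta, one_mul]

theorem sum_Ioc_ramanujanSum_mul_div (n : ℕ) :
    ∑ k ∈ Ioc 0 n, ramanujanSum R n k * (n / k : ℕ) = ∑ d ∈ n.divisors, (d : R) := by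
  rw [← sum_Ioc_mul_zeta_eq_sum, ramanujanSum_mul_zeta, sum_Ioc_idOnDivisors]

end CommRing

section Field

open scoped Nat

variable {K : Type*} [Field K]

variable (K) in
/-- Hölder's closed form of Ramanujan's sum `c_k(n)`. -/
def holder (n : ℕ) : ArithmeticFunction K :=
  ⟨fun k => μ (k / n.gcd k) * φ k / φ (k / n.gcd k), by simp⟩

theorem holder_apply (n k : ℕ) :
    holder K n k = μ (k / n.gcd k) * φ k / φ (k / n.gcd k) := rfl

theorem isMultiplicative_holder (n : ℕ) : (holder K n).IsMultiplicative := by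
  refine ⟨by simp [holder_apply], fun {a b} hab => ?_⟩
  have hquot : a * b / n.gcd (a * b) = a / n.gcd a * (b / n.gcd b) := by
    rw [Nat.Coprime.gcd_mul n hab, Nat.div_mul_div_comm (Nat.gcd_dvd_right n a)
      (Nat.gcd_dvd_right n b)]
  have hcop : (a / n.gcd a).Coprime (b / n.gcd b) :=
    (hab.coprime_dvd_left (Nat.div_dvd_of_dvd (Nat.gcd_dvd_right n a))).coprime_dvd_right
      (Nat.div_dvd_of_dvd (Nat.gcd_dvd_right n b))
  simp only [holder_apply, hquot, isMultiplicative_moebius.map_mul_of_coprime hcop,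
    Nat.totient_mul hab, Nat.totient_mul hcop]
  push_cast
  ring

theorem ramanujanSum_eq_holder [CharZero K] (n : ℕ) : ramanujanSum K n = holder K n := by
  refine (IsMultiplicative.eq_iff_eq_on_prime_powers _ (isMultiplicative_ramanujanSum n) _
    (isMultiplicative_holder n)).2 fun p i hp => ?_
  rcases i with _ | a
  · rw [pow_zero, (isMultiplicative_ramanujanSum n).map_one, (isMultiplicative_holder n).map_one]
  obtain ⟨j, hj, hg⟩ := (Nat.dvd_prime_pow hp).1 (Nat.gcd_dvd_right n (p ^ (a + 1)))
  have hdvd : ∀ i ≤ a + 1, p ^ i ∣ n ↔ i ≤ j := fun i hi => by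
    rw [← Nat.pow_dvd_pow_iff_le_right hp.one_lt, ← hg, Nat.dvd_gcd_iff,
      and_iff_left (Nat.pow_dvd_pow p hi)]
  rw [ramanujanSum, moebius_mul_apply_prime_pow_succ hp, holder_apply, hg, idOnDivisors_apply,
    idOnDivisors_apply, Nat.pow_div hj hp.pos]
  rcases (by omega : j = a + 1 ∨ j = a ∨ j + 2 ≤ a + 1) with rfl | rfl | hlt
  · simp [hdvd, Nat.totient_prime_pow_succ hp, Nat.cast_sub hp.one_le]
    ring
  · have hp1 : (p : K) - 1 ≠ 0 := sub_ne_zero.2 (by exact_mod_cast hp.one_lt.ne')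
    simp [hdvd, Nat.totient_prime_pow_succ hp, Nat.totient_prime hp, moebius_apply_prime hp,
      Nat.cast_sub hp.one_le, neg_div, mul_div_cancel_right₀ _ hp1]
  · simp only [hdvd _ le_rfl, hdvd a (by omega), if_neg (by omega : ¬a + 1 ≤ j),
      if_neg (by omega : ¬a ≤ j), moebius_apply_prime_pow hp (by omega : a + 1 - j ≠ 0),
      if_neg (by omega : a + 1 - j ≠ 1)]
    simp

end Field

end ArithmeticFunction

theorem sigma_formula_general (n : ℕ) :
    ((∑ d ∈ n.divisors, d : ℕ) : ℚ) =
      ∑ k ∈ Icc 1 n,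
        ((n / k : ℕ) : ℚ) * (ArithmeticFunction.moebius (k / Nat.gcd n k) : ℚ) *
          ((Nat.totient k : ℚ) / (Nat.totient (k / Nat.gcd n k) : ℚ)) := by
  rw [Nat.cast_sum, ← sum_Ioc_ramanujanSum_mul_div, ← Icc_add_one_left_eq_Ioc,
    ramanujanSum_eq_holder]
  refine sum_congr rfl fun k _ => ?_
  rw [holder_apply]
  ring

theorem sigma_formula (n : ℕ) (hn : 0 < n) :
    ((∑ d ∈ n.divisors, d : ℕ) : ℚ) =
      ∑ k ∈ Icc 1 n,
        ((n / k : ℕ) : ℚ) * (ArithmeticFunction.moebius (k / Nat.gcd n k) : ℚ) *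
          ((Nat.totient k : ℚ) / (Nat.totient (k / Nat.gcd n k) : ℚ)) :=
  sigma_formula_general n
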